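/- arXiv:1702.03825 — 4 statements merged into one kernel-verified Lean document; each statement's English description precedes it below -/
import Mathlib

section
/- In a scalar graph G where each vertex v has scalar value KC(v) (the maximum K such that v belongs to a K-core of G), every maximal α-connected component of G is a K-core of G with K = α. -/
variable {V : Type*} [Fintype V]

/-- \`C\` is a \`K\`-core of \`G\`: a nonempty set of vertices each having at least
\`K\` neighbors within \`C\`. -/
def IsKCore (G : SimpleGraph V) (K : ℕ) (C : Set V) : Prop :=
  C.Nonempty ∧ ∀ v ∈ C, K ≤ (C ∩ {u | G.Adj v u}).ncard

/-- \`KC(v)\`: the maximum \`K\` such that \`v\` belongs to a \`K\`-core of \`G\`. -/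
noncomputable def coreNum (G : SimpleGraph V) (v : V) : ℕ :=
  sSup {K : ℕ | ∃ C : Set V, IsKCore G K C ∧ v ∈ C}

/-- \`C\` is a maximal α-connected component of the vertex-scalar graph \`(G, f)\`. -/
def IsMACC (G : SimpleGraph V) (f : V → ℝ) (α : ℝ) (C : Set V) : Prop :=
  C.Nonempty ∧ (∀ v ∈ C, α ≤ f v) ∧
  (∀ v ∈ C, ∀ w, G.Adj v w → w ∉ C → f w < α) ∧
  (G.induce C).Connected

/-- With scalar value `KC(v)` on each vertex, every maximal α-connected
component is a K-core with `K = α`. -/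
theorem stmt6 (G : SimpleGraph V) (α : ℕ) (C : Set V)
    (h : IsMACC G (fun v => (coreNum G v : ℝ)) (α : ℝ) C) :
    IsKCore G α C := by
  obtain ⟨hne, hge, hbd, hconn⟩ := h
  refine ⟨hne, fun v hv => ?_⟩
  have hbdd : ∀ u : V, BddAbove {K : ℕ | ∃ C : Set V, IsKCore G K C ∧ u ∈ C} := by
    intro u
    refine ⟨Nat.card V, fun K hK => ?_⟩
    obtain ⟨D, ⟨_, hD⟩, huD⟩ := hK
    calc K ≤ (D ∩ {w | G.Adj u w}).ncard := hD u huD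
      _ ≤ (Set.univ : Set V).ncard := Set.ncard_le_ncard (Set.subset_univ _) Set.finite_univ
      _ = Nat.card V := Set.ncard_univ V
  have hαv : α ≤ coreNum G v := by have := hge v hv; simp only at this; exact_mod_cast this
  have hmem : coreNum G v ∈ {K : ℕ | ∃ C : Set V, IsKCore G K C ∧ v ∈ C} := by
    apply Nat.sSup_mem
    · exact ⟨0, {v}, ⟨⟨v, rfl⟩, fun u _ => Nat.zero_le _⟩, rfl⟩
    · exact hbdd v
  obtain ⟨D, ⟨hDne, hD⟩, hvD⟩ := hmem
  have hDcore : ∀ u ∈ D, α ≤ coreNum G u := by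
    intro u hu
    exact le_trans hαv (le_csSup (hbdd u) ⟨D, ⟨hDne, hD⟩, hu⟩)
  have hsub : D ∩ {w | G.Adj v w} ⊆ C ∩ {w | G.Adj v w} := by
    rintro w ⟨hwD, hwA⟩
    refine ⟨?_, hwA⟩
    by_contra hwC
    have h1 : ((α : ℕ) : ℝ) ≤ (coreNum G w : ℝ) := by exact_mod_cast hDcore w hwD
    have h2 := hbd v hv w hwA hwC
    simp only at h2
    linarith
  calc α ≤ coreNum G v := hαv
    _ ≤ (D ∩ {w | G.Adj v w}).ncard := hD v hvD
    _ ≤ (C ∩ {w | G.Adj v w}).ncard := Set.ncard_le_ncard hsub (Set.toFinite _)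
end

section
/- If all vertices of a vertex-scalar graph G have distinct scalar values, then for the tree T produced by processing vertices in decreasing scalar order and attaching each new vertex's node as parent of the roots of adjacent already-processed subtrees, the subtree of T rooted at node n(v) corresponds exactly to MCC(v) (the maximal (v.scalar)-connected component containing v). -/
/-!
Once the vertices of a set `D` of highest values have been processed, the parent pointers form a
forest in which the subtree below each `u ∈ D` is the component of `u` in the subgraph induced by
the processed vertices of value at least `f u`, and each root is the lowest vertex of its
component of `D`. Processing the next vertex `v` attaches to `v` the roots of the trees of its
processed neighbours, which are exactly the components of `D` that merge with `v` in `D ∪ {v}`,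
so the invariant survives. When `D` is everything, the subtree below `v` is the component of `v`
among the vertices of value at least `f v`, which is `MCC(v)`.
-/

variable {V : Type*} [Fintype V] [DecidableEq V]

/-- Follow the parent pointers \`p\` for at most \`k\` steps. -/
def iterParent {α : Type*} (p : α → Option α) : ℕ → α → α
  | 0, a => a
  | k + 1, a =>
    match p a with
    | none => a
    | some b => iterParent p k b

/-- The root of the current subtree containing \`a\` in the forest \`p\`. -/
def rootOf {α : Type*} [Fintype α] (p : α → Option α) (a : α) : α :=
  iterParent p (Fintype.card α) a

/-- Processing vertex \`v\`: for each already-processed neighbor \`u\` whose current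
subtree does not contain \`v\`, make \`v\` the parent of the root of that subtree. -/
def stepVert (G : SimpleGraph V) [DecidableRel G.Adj] (v : V) (processed : List V)
    (p : V → Option V) : V → Option V :=
  processed.foldl (fun q u =>
    if G.Adj v u ∧ rootOf q u ≠ v then Function.update q (rootOf q u) (some v) else q) p

/-- Run the scalar-tree construction on the remaining vertex list, given the
already-processed vertices and the current parent assignment. -/
def runVert (G : SimpleGraph V) [DecidableRel G.Adj] :
    List V → List V → (V → Option V) → (V → Option V)
  | [], _, p => p
  | v :: rest, processed, p => runVert G rest (v :: processed) (stepVert G v processed p)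

/-- The parent assignment produced by processing the vertices of \`vs\` in order. -/
def scalarForest (G : SimpleGraph V) [DecidableRel G.Adj] (vs : List V) : V → Option V :=
  runVert G vs [] (fun _ => none)

open Relation

namespace SimpleGraph

variable {W : Type*} {G H : SimpleGraph W} {A B : Set W} {u v w x : W}

/-- The edges of `G` with both ends in `A`, as a graph on all of `W` (unlike `G.induce A`). -/
abbrev restrict (G : SimpleGraph W) (A : Set W) : SimpleGraph W where
  Adj a b := a ∈ A ∧ b ∈ A ∧ G.Adj a b
  symm := ⟨fun _ _ h => ⟨h.2.1, h.1, h.2.2.symm⟩⟩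
  loopless := ⟨fun _ h => G.irrefl h.2.2⟩

lemma restrict_le : G.restrict A ≤ G := fun _ _ h => h.2.2

lemma restrict_mono (h : A ⊆ B) : G.restrict A ≤ G.restrict B :=
  fun _ _ hab => ⟨h hab.1, h hab.2.1, hab.2.2⟩

lemma Reachable.mem_of_restrict (h : (G.restrict A).Reachable u w) (hu : u ∈ A) : w ∈ A := by
  rw [reachable_iff_reflTransGen] at h
  induction h with
  | refl => exact hu
  | tail _ hbc _ => exact hbc.2.1

lemma reachable_restrict_inter_iff (hB : ∀ x, (G.restrict A).Reachable u x → x ∈ B) :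
    (G.restrict (A ∩ B)).Reachable u w ↔ (G.restrict A).Reachable u w := by
  refine ⟨fun h => h.mono (restrict_mono Set.inter_subset_left), fun h => ?_⟩
  rw [reachable_iff_reflTransGen] at h
  induction h with
  | refl => rfl
  | @tail b c hub hbc ih =>
    have hb := hB b ((reachable_iff_reflTransGen _ _).2 hub)
    have hc := hB c ((reachable_iff_reflTransGen _ _).2 (hub.tail hbc))
    exact ih.trans (Adj.reachable ⟨⟨hbc.1, hb⟩, ⟨hbc.2.1, hc⟩, hbc.2.2⟩)

lemma reachable_restrict_insert_iff :
    (G.restrict (insert v A)).Reachable v w ↔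
      w = v ∨ ∃ u ∈ A, G.Adj v u ∧ (G.restrict A).Reachable u w := by
  constructor
  · intro h
    rw [reachable_iff_reflTransGen] at h
    induction h with
    | refl => exact .inl rfl
    | @tail b c _ hbc ih =>
      obtain ⟨-, rfl | hc, hbc⟩ := hbc
      · exact .inl rfl
      obtain rfl | ⟨u, hu, hvu, hub⟩ := ih
      · exact .inr ⟨c, hc, hbc, .refl _⟩
      · have hbc' : (G.restrict A).Adj b c := ⟨hub.mem_of_restrict hu, hc, hbc⟩
        exact .inr ⟨u, hu, hvu, hub.trans hbc'.reachable⟩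
  · rintro (rfl | ⟨u, hu, hvu, hub⟩)
    · rfl
    · have hvu' : (G.restrict (insert v A)).Adj v u := ⟨.inl rfl, .inr hu, hvu⟩
      exact hvu'.reachable.trans (hub.mono (restrict_mono (Set.subset_insert _ _)))

lemma Reachable.of_restrict_insert (hx : x ∈ A)
    (hv : ∀ u, G.Adj v u → ¬ (G.restrict A).Reachable x u)
    (h : (G.restrict (insert v A)).Reachable x w) : (G.restrict A).Reachable x w := by
  rw [reachable_iff_reflTransGen] at h
  induction h with
  | refl => rfl
  | @tail b c _ hbc ih =>
    obtain ⟨-, rfl | hc, hbc⟩ := hbc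
    · exact absurd ih (hv b hbc.symm)
    · exact ih.trans (Adj.reachable ⟨ih.mem_of_restrict hx, hc, hbc⟩)

lemma connected_induce_setOf_reachable (hH : H ≤ G) (v : W) :
    (G.induce {w | H.Reachable v w}).Connected := by
  have hsupp : {w | H.Reachable v w} = (H.connectedComponentMk v).supp := by
    ext w
    simp [ConnectedComponent.mem_supp_iff, ConnectedComponent.eq, reachable_comm]
  rw [hsupp]
  exact (H.connectedComponentMk v).connected_toSimpleGraph.mono (comap_monotone _ hH)

end SimpleGraph

section Forest

variable {α β : Type*} {p : α → Option α} {a b r : α}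

def HasParent (p : α → Option α) (a b : α) : Prop := p a = some b

lemma hasParent_rightUnique : Relator.RightUnique (HasParent p) :=
  fun _ _ _ hb hc => Option.some.inj (hb.symm.trans hc)

lemma eq_of_descends_of_eq_none (h : ReflTransGen (HasParent p) a b) (ha : p a = none) :
    a = b := by
  obtain rfl | ⟨c, hac, -⟩ := h.cases_head
  · rfl
  · exact absurd (ha.symm.trans hac) nofun

lemma mem_of_descends {D : Set α} (hD : ∀ x y, p x = some y → y ∈ D)
    (h : ReflTransGen (HasParent p) a b) (ha : a ∈ D) : b ∈ D := by
  induction h with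
  | refl => exact ha
  | tail _ hbc _ => exact hD _ _ hbc

lemma descends_iterParent (k : ℕ) (a : α) :
    ReflTransGen (HasParent p) a (iterParent p k a) := by
  induction k generalizing a with
  | zero => exact .refl
  | succ k ih =>
    cases h : p a with
    | none => simpa [iterParent, h] using ReflTransGen.refl
    | some b => simpa [iterParent, h] using ReflTransGen.head (r := HasParent p) h (ih b)

lemma iterParent_eq_none [Finite α] [Preorder β] {f : α → β}
    (hf : ∀ x y, p x = some y → f y < f x) (k : ℕ) (a : α)
    (hk : {x | f x ≤ f a}.ncard ≤ k) : p (iterParent p k a) = none := by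
  induction k generalizing a with
  | zero =>
    have := (Set.ncard_pos (Set.toFinite _)).2 (⟨a, le_rfl⟩ : {x | f x ≤ f a}.Nonempty)
    omega
  | succ k ih =>
    cases h : p a with
    | none => simp [iterParent, h]
    | some b =>
      have hba := hf a b h
      have hsub : {x | f x ≤ f b} ⊂ {x | f x ≤ f a} :=
        ⟨fun x hx => hx.trans hba.le, fun h => not_le_of_gt hba (h (le_refl (f a)))⟩
      simpa [iterParent, h] using ih b (by have := Set.ncard_lt_ncard hsub; omega)

variable [Fintype α]

lemma descends_rootOf (p : α → Option α) (a : α) : ReflTransGen (HasParent p) a (rootOf p a) :=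
  descends_iterParent _ a

lemma rootOf_eq_none [Preorder β] {f : α → β} (hf : ∀ x y, p x = some y → f y < f x)
    (a : α) :
    p (rootOf p a) = none :=
  iterParent_eq_none hf _ a ((Set.ncard_le_card _).trans (Nat.card_eq_fintype_card).le)

lemma rootOf_eq [Preorder β] {f : α → β} (hf : ∀ x y, p x = some y → f y < f x)
    (h : ReflTransGen (HasParent p) a r) (hr : p r = none) : rootOf p a = r := by
  rcases ReflTransGen.total_of_right_unique hasParent_rightUnique (descends_rootOf p a) h
    with h' | h'
  · exact eq_of_descends_of_eq_none h' (rootOf_eq_none hf a)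
  · exact (eq_of_descends_of_eq_none h' hr).symm

end Forest

section Reparent

variable {α : Type*} {p : α → Option α} {R : Set α} {v a b x : α}

open Classical in
noncomputable def reparent (p : α → Option α) (R : Set α) (v : α) : α → Option α :=
  fun x => if x ∈ R then some v else p x

lemma reparent_of_mem (hx : x ∈ R) : reparent p R v x = some v := if_pos hx

lemma reparent_of_notMem (hx : x ∉ R) : reparent p R v x = p x := if_neg hx

lemma reparent_empty : reparent p ∅ v = p := funext fun _ => reparent_of_notMem id

lemma reparent_insert [DecidableEq α] (r : α) :
    reparent p (insert r R) v = Function.update (reparent p R v) r (some v) := by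
  funext x
  by_cases hx : x = r
  · subst hx; simp [reparent_of_mem]
  · by_cases hxR : x ∈ R
    · simp [hx, reparent_of_mem, hxR]
    · simp [hx, reparent_of_notMem, hxR]

lemma reparent_of_eq_some (hR : ∀ r ∈ R, p r = none) (h : p a = some b) :
    reparent p R v a = some b := by
  rwa [reparent_of_notMem fun ha => absurd (h.symm.trans (hR a ha)) nofun]

lemma descends_reparent (hR : ∀ r ∈ R, p r = none) (h : ReflTransGen (HasParent p) a b) :
    ReflTransGen (HasParent (reparent p R v)) a b :=
  ReflTransGen.mono (fun _ _ => reparent_of_eq_some hR) _ _ h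

lemma descends_reparent_iff_of_ne (hR : ∀ r ∈ R, p r = none) (hvR : v ∉ R) (hpv : p v = none)
    (hb : b ≠ v) :
    ReflTransGen (HasParent (reparent p R v)) a b ↔ ReflTransGen (HasParent p) a b := by
  refine ⟨fun h => ?_, descends_reparent hR⟩
  induction h using ReflTransGen.head_induction_on with
  | refl => exact .refl
  | @head x c hxc hcb ih =>
    by_cases hx : x ∈ R
    · rw [HasParent, reparent_of_mem hx, Option.some.injEq] at hxc
      subst hxc
      have := eq_of_descends_of_eq_none hcb ((reparent_of_notMem hvR).trans hpv)
      exact absurd this.symm hb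
    · rw [HasParent, reparent_of_notMem hx] at hxc
      exact ih.head hxc

lemma descends_reparent_self_iff (hR : ∀ r ∈ R, p r = none) (hv : ∀ x, p x ≠ some v) :
    ReflTransGen (HasParent (reparent p R v)) a v ↔
      a = v ∨ ∃ r ∈ R, ReflTransGen (HasParent p) a r := by
  constructor
  · intro h
    induction h using ReflTransGen.head_induction_on with
    | refl => exact .inl rfl
    | @head x c hxc _ ih =>
      by_cases hx : x ∈ R
      · exact .inr ⟨x, hx, .refl⟩
      rw [HasParent, reparent_of_notMem hx] at hxc
      obtain rfl | ⟨r, hr, hcr⟩ := ih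
      · exact absurd hxc (hv x)
      · exact .inr ⟨r, hr, hcr.head hxc⟩
  · rintro (rfl | ⟨r, hr, har⟩)
    · exact .refl
    · exact (descends_reparent hR har).tail (reparent_of_mem hr)

end Reparent

section DecreasingForest

variable {α β : Type*} [Preorder β]

structure IsDecreasingForest (f : α → β) (D : Set α) (p : α → Option α) : Prop where
  lt_of_eq_some : ∀ ⦃x y⦄, p x = some y → f y < f x
  mem_of_eq_some : ∀ ⦃x y⦄, p x = some y → x ∈ D ∧ y ∈ D

namespace IsDecreasingForest

variable {f : α → β} {D R : Set α} {p : α → Option α} {u v x : α}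

lemma eq_none_of_notMem (hp : IsDecreasingForest f D p) (hx : x ∉ D) : p x = none :=
  Option.eq_none_iff_forall_ne_some.2 fun _ h => hx (hp.mem_of_eq_some h).1

lemma reparent (hp : IsDecreasingForest f D p) (hv : ∀ x ∈ D, f v < f x) (hR : R ⊆ D) :
    IsDecreasingForest f (insert v D) (reparent p R v) := by
  constructor <;> intro x y hxy <;> by_cases hx : x ∈ R
  · rw [reparent_of_mem hx, Option.some.injEq] at hxy
    exact hxy ▸ hv x (hR hx)
  · exact hp.lt_of_eq_some ((reparent_of_notMem hx).symm.trans hxy)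
  · rw [reparent_of_mem hx, Option.some.injEq] at hxy
    exact ⟨.inr (hR hx), .inl hxy.symm⟩
  · have := hp.mem_of_eq_some ((reparent_of_notMem hx).symm.trans hxy)
    exact ⟨.inr this.1, .inr this.2⟩

variable [Fintype α]

lemma rootOf_mem (hp : IsDecreasingForest f D p) (hu : u ∈ D) : rootOf p u ∈ D :=
  mem_of_descends (fun _ _ h => (hp.mem_of_eq_some h).2) (descends_rootOf p u) hu

lemma rootOf_reparent_of_mem (hp : IsDecreasingForest f D p) (hv : ∀ x ∈ D, f v < f x)
    (hR : ∀ r ∈ R, r ∈ D ∧ p r = none) (hu : rootOf p u ∈ R) :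
    rootOf (_root_.reparent p R v) u = v := by
  have hvD : v ∉ D := fun h => lt_irrefl _ (hv v h)
  have hq := hp.reparent hv fun r hr => (hR r hr).1
  refine rootOf_eq hq.lt_of_eq_some ?_ ?_
  · exact (descends_reparent (fun r hr => (hR r hr).2) (descends_rootOf p u)).tail
      (reparent_of_mem hu)
  · rw [reparent_of_notMem fun h => hvD (hR v h).1, hp.eq_none_of_notMem hvD]

lemma rootOf_reparent_of_notMem (hp : IsDecreasingForest f D p) (hv : ∀ x ∈ D, f v < f x)
    (hR : ∀ r ∈ R, r ∈ D ∧ p r = none) (hu : rootOf p u ∉ R) :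
    rootOf (_root_.reparent p R v) u = rootOf p u := by
  have hq := hp.reparent hv fun r hr => (hR r hr).1
  refine rootOf_eq hq.lt_of_eq_some ?_ ?_
  · exact descends_reparent (fun r hr => (hR r hr).2) (descends_rootOf p u)
  · rw [reparent_of_notMem hu, rootOf_eq_none hp.lt_of_eq_some]

end IsDecreasingForest

end DecreasingForest

section NeighborRoots

variable {α : Type*} [Fintype α] {G : SimpleGraph α} {p : α → Option α} {u v : α}
  {l : List α}

def neighborRoots (G : SimpleGraph α) (p : α → Option α) (v : α) (l : List α) : Set α :=
  rootOf p '' {u | u ∈ l ∧ G.Adj v u}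

lemma neighborRoots_nil : neighborRoots G p v [] = ∅ := by simp [neighborRoots]

lemma neighborRoots_append_singleton_of_adj (h : G.Adj v u) :
    neighborRoots G p v (l ++ [u]) = insert (rootOf p u) (neighborRoots G p v l) := by
  ext r
  simp only [neighborRoots, Set.mem_image, Set.mem_insert_iff, List.mem_append,
    List.mem_singleton, Set.mem_ofPred_eq]
  constructor
  · rintro ⟨w, ⟨hw | rfl, hvw⟩, rfl⟩
    exacts [.inr ⟨w, ⟨hw, hvw⟩, rfl⟩, .inl rfl]
  · rintro (rfl | ⟨w, ⟨hw, hvw⟩, rfl⟩)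
    exacts [⟨u, ⟨.inr rfl, h⟩, rfl⟩, ⟨w, ⟨.inl hw, hvw⟩, rfl⟩]

lemma neighborRoots_append_singleton_of_not_adj (h : ¬ G.Adj v u) :
    neighborRoots G p v (l ++ [u]) = neighborRoots G p v l := by
  refine congrArg (rootOf p '' ·) (Set.ext fun w => ?_)
  simp only [List.mem_append, List.mem_singleton, Set.mem_ofPred_eq]
  exact ⟨fun ⟨hw, hvw⟩ => ⟨hw.resolve_right (by rintro rfl; exact h hvw), hvw⟩,
    fun ⟨hw, hvw⟩ => ⟨.inl hw, hvw⟩⟩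

lemma IsDecreasingForest.neighborRoots_subset {β : Type*} [Preorder β] {f : α → β}
    {D : Set α} (hp : IsDecreasingForest f D p) (hl : ∀ u ∈ l, u ∈ D) :
    ∀ r ∈ neighborRoots G p v l, r ∈ D ∧ p r = none := by
  rintro _ ⟨u, ⟨hu, -⟩, rfl⟩
  exact ⟨hp.rootOf_mem (hl u hu), rootOf_eq_none hp.lt_of_eq_some u⟩

end NeighborRoots

section JoinForest

variable {α β : Type*} [Preorder β]

/-- The invariant of the construction once the vertices of `D` have been processed. -/
structure IsJoinForest (G : SimpleGraph α) (f : α → β) (D : Set α) (p : α → Option α) :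
    Prop extends IsDecreasingForest f D p where
  descends_iff : ∀ u ∈ D, ∀ w,
    ReflTransGen (HasParent p) w u ↔ (G.restrict (D ∩ {x | f u ≤ f x})).Reachable u w
  le_of_reachable : ∀ r ∈ D, p r = none → ∀ w, (G.restrict D).Reachable r w → f r ≤ f w

namespace IsJoinForest

variable {G : SimpleGraph α} {f : α → β} {D : Set α} {p : α → Option α} {r u : α}

lemma descends_iff_of_eq_none (hp : IsJoinForest G f D p) (hr : r ∈ D) (hroot : p r = none)
    (w : α) : ReflTransGen (HasParent p) w r ↔ (G.restrict D).Reachable r w := by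
  rw [hp.descends_iff r hr w]
  exact SimpleGraph.reachable_restrict_inter_iff (hp.le_of_reachable r hr hroot)

lemma descends_rootOf_iff [Fintype α] (hp : IsJoinForest G f D p) (hu : u ∈ D) (w : α) :
    ReflTransGen (HasParent p) w (rootOf p u) ↔ (G.restrict D).Reachable u w := by
  have hroot := rootOf_eq_none hp.lt_of_eq_some u
  have hrD := hp.rootOf_mem hu
  have hru := (hp.descends_iff_of_eq_none hrD hroot u).1 (descends_rootOf p u)
  rw [hp.descends_iff_of_eq_none hrD hroot]
  exact ⟨hru.symm.trans, hru.trans⟩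

lemma rootOf_eq_of_reachable [Fintype α] (hp : IsJoinForest G f D p) (hr : r ∈ D)
    (hroot : p r = none) (h : (G.restrict D).Reachable r u) : rootOf p u = r :=
  rootOf_eq hp.lt_of_eq_some ((hp.descends_iff_of_eq_none hr hroot u).2 h) hroot

end IsJoinForest

lemma isJoinForest_empty (G : SimpleGraph α) (f : α → β) :
    IsJoinForest G f ∅ fun _ => none := by
  refine ⟨⟨?_, ?_⟩, ?_, ?_⟩ <;> simp

end JoinForest

section Construction

variable {β : Type*} [Preorder β] {G : SimpleGraph V} [DecidableRel G.Adj] {f : V → β}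

theorem stepVert_eq_reparent {D : Set V} {p : V → Option V} {v : V}
    (hp : IsDecreasingForest f D p) (hv : ∀ x ∈ D, f v < f x) {processed : List V}
    (hl : ∀ u ∈ processed, u ∈ D) :
    stepVert G v processed p = reparent p (neighborRoots G p v processed) v := by
  unfold stepVert
  induction processed using List.reverseRecOn with
  | nil => simp [neighborRoots_nil, reparent_empty]
  | append_singleton l u ih =>
    have hlD : ∀ x ∈ l, x ∈ D := fun x hx => hl x (by simp [hx])
    have huD : u ∈ D := hl u (by simp)
    have hR := hp.neighborRoots_subset (G := G) (v := v) hlD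
    rw [List.foldl_append, ih hlD, List.foldl_cons, List.foldl_nil]
    by_cases hvu : G.Adj v u
    · rw [neighborRoots_append_singleton_of_adj hvu]
      by_cases hr : rootOf p u ∈ neighborRoots G p v l
      · rw [if_neg (by simp [hp.rootOf_reparent_of_mem hv hR hr]), Set.insert_eq_of_mem hr]
      · have hne : rootOf p u ≠ v := fun h => lt_irrefl _ (hv v (h ▸ hp.rootOf_mem huD))
        rw [hp.rootOf_reparent_of_notMem hv hR hr, if_pos ⟨hvu, hne⟩, reparent_insert]
    · rw [if_neg (by simp [hvu]), neighborRoots_append_singleton_of_not_adj hvu]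

open SimpleGraph in
theorem isJoinForest_stepVert {p : V → Option V} {processed : List V} {v : V}
    (hp : IsJoinForest G f {x | x ∈ processed} p) (hv : ∀ x ∈ processed, f v < f x) :
    IsJoinForest G f (insert v {x | x ∈ processed}) (stepVert G v processed p) := by
  set D := {x | x ∈ processed}
  set R := neighborRoots G p v processed
  have hvD : v ∉ D := fun h => lt_irrefl _ (hv v h)
  have hR : ∀ r ∈ R, r ∈ D ∧ p r = none := hp.neighborRoots_subset fun _ h => h
  have hvR : v ∉ R := fun h => hvD (hR v h).1
  rw [stepVert_eq_reparent hp.toIsDecreasingForest hv fun _ h => h]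
  refine ⟨hp.reparent hv fun r hr => (hR r hr).1, ?_, ?_⟩
  · rintro u (rfl | hu) w
    · have hle : insert u D ⊆ {x | f u ≤ f x} := by
        rintro x (rfl | hx)
        exacts [le_rfl, (hv x hx).le]
      rw [Set.inter_eq_left.2 hle, descends_reparent_self_iff (fun r hr => (hR r hr).2)
          (fun x hx => hvD (hp.mem_of_eq_some hx).2), reachable_restrict_insert_iff]
      refine or_congr_right ⟨?_, ?_⟩
      · rintro ⟨_, ⟨x, ⟨hx, hux⟩, rfl⟩, hw⟩
        exact ⟨x, hx, hux, (hp.descends_rootOf_iff hx w).1 hw⟩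
      · rintro ⟨x, hx, hux, hw⟩
        exact ⟨rootOf p x, ⟨x, ⟨hx, hux⟩, rfl⟩, (hp.descends_rootOf_iff hx w).2 hw⟩
    · rw [Set.insert_inter_of_notMem (t := {x | f u ≤ f x}) (not_le_of_gt (hv u hu)),
        descends_reparent_iff_of_ne (fun r hr => (hR r hr).2) hvR (hp.eq_none_of_notMem hvD)
          (ne_of_mem_of_not_mem hu hvD), hp.descends_iff u hu w]
  · rintro r (rfl | hr) hroot w hw
    · obtain rfl | hw := hw.mem_of_restrict (Set.mem_insert r D)
      exacts [le_rfl, (hv w hw).le]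
    · have hrR : r ∉ R := fun h => by rw [reparent_of_mem h] at hroot; cases hroot
      have hpr : p r = none := (reparent_of_notMem hrR).symm.trans hroot
      refine hp.le_of_reachable r hr hpr w (hw.of_restrict_insert hr fun u hvu hru => hrR ?_)
      exact ⟨u, ⟨hru.mem_of_restrict hr, hvu⟩, hp.rootOf_eq_of_reachable hr hpr hru⟩

/-- `processed.reverse ++ rest` is the whole processing order, and stays fixed along the run. -/
theorem isJoinForest_runVert (rest processed : List V) {p : V → Option V}
    (hp : IsJoinForest G f {x | x ∈ processed} p)
    (hsort : (processed.reverse ++ rest).Pairwise fun a b => f b < f a) :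
    IsJoinForest G f {x | x ∈ processed ∨ x ∈ rest} (runVert G rest processed p) := by
  induction rest generalizing processed p with
  | nil => simpa [runVert] using hp
  | cons a rest ih =>
    have hv : ∀ x ∈ processed, f a < f x := fun x hx =>
      (List.pairwise_append.1 hsort).2.2 x (List.mem_reverse.2 hx) a List.mem_cons_self
    have hstep : IsJoinForest G f {x | x ∈ a :: processed} (stepVert G a processed p) := by
      simpa [Set.insert_def] using isJoinForest_stepVert hp hv
    simpa [runVert, or_assoc, or_left_comm] using ih (a :: processed) hstep (by simpa using hsort)

end Construction

open SimpleGraph in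
theorem isMACC_setOf_reachable_restrict {W : Type*} (G : SimpleGraph W) (f : W → ℝ) {α : ℝ}
    {v : W} (hv : α ≤ f v) : IsMACC G f α {w | (G.restrict {x | α ≤ f x}).Reachable v w} :=
  ⟨⟨v, .refl v⟩, fun _ hw => hw.mem_of_restrict hv,
    fun _ hu _ huw hw => not_le.1 fun hαw =>
      hw (hu.trans (Adj.reachable ⟨hu.mem_of_restrict hv, hαw, huw⟩)),
    connected_induce_setOf_reachable restrict_le v⟩

/-- If all scalar values are distinct, then for the tree produced by the
decreasing-order construction, the subtree rooted at `n(v)` is exactly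
`MCC(v)`, the maximal `f v`-connected component containing `v`. -/
theorem stmt10 (G : SimpleGraph V) [DecidableRel G.Adj] (f : V → ℝ)
    (hinj : Function.Injective f)
    (vs : List V) (hnd : vs.Nodup) (hall : ∀ v : V, v ∈ vs)
    (hsort : vs.Pairwise (fun a b => f b ≤ f a)) (v : V) :
    v ∈ {u : V | Relation.ReflTransGen
          (fun a b => scalarForest G vs a = some b) u v} ∧
    IsMACC G f (f v)
      {u : V | Relation.ReflTransGen
        (fun a b => scalarForest G vs a = some b) u v} := by
  have hlt : vs.Pairwise fun a b => f b < f a :=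
    (hsort.and hnd).imp fun ⟨hle, hne⟩ => hle.lt_of_ne fun h => hne (hinj h).symm
  have hT : IsJoinForest G f Set.univ (scalarForest G vs) := by
    simpa [hall, scalarForest] using
      isJoinForest_runVert vs [] (by simpa using isJoinForest_empty G f) (by simpa using hlt)
  have hsubtree : {u | ReflTransGen (fun a b => scalarForest G vs a = some b) u v} =
      {w | (G.restrict {x | f v ≤ f x}).Reachable v w} := by
    ext w
    have h := hT.descends_iff v trivial w
    rw [Set.univ_inter] at h
    exact h
  exact ⟨.refl, hsubtree ▸ isMACC_setOf_reachable_restrict G f le_rfl⟩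
end

section
/- In the scalar tree T generated by the decreasing-order construction algorithm, every node's scalar value is greater than or equal to its parent's scalar value. -/
variable {V : Type*} [Fintype V] [DecidableEq V]

/-! Invariant: every parent pointer joins two processed vertices and does not increase the
scalar value. Processing `v` only adds pointers from roots of processed vertices (which are
processed, by the invariant) to `v`, and `v` has the least scalar value processed so far. -/

def IsDescendingForestOn {α β : Type*} [Preorder β] (f : α → β) (S : Set α)
    (p : α → Option α) : Prop :=
  ∀ x y, p x = some y → x ∈ S ∧ y ∈ S ∧ f y ≤ f x

section Forest

variable {α β : Type*} [Preorder β] {f : α → β} {S : Set α} {p : α → Option α}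

lemma iterParent_mem (hS : ∀ x y, x ∈ S → p x = some y → y ∈ S) :
    ∀ (k : ℕ) (a : α), a ∈ S → iterParent p k a ∈ S
  | 0, _, ha => ha
  | k + 1, a, ha => by
      unfold iterParent
      cases hpa : p a with
      | none => exact ha
      | some b => exact iterParent_mem hS k b (hS a b ha hpa)

lemma IsDescendingForestOn.mono (hp : IsDescendingForestOn f S p) {T : Set α} (hST : S ⊆ T) :
    IsDescendingForestOn f T p :=
  fun x y hxy => ⟨hST (hp x y hxy).1, hST (hp x y hxy).2.1, (hp x y hxy).2.2⟩

lemma IsDescendingForestOn.rootOf_mem [Fintype α] (hp : IsDescendingForestOn f S p)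
    {a : α} (ha : a ∈ S) : rootOf p a ∈ S :=
  iterParent_mem (fun x y _ hxy => (hp x y hxy).2.1) _ a ha

lemma IsDescendingForestOn.update [DecidableEq α] (hp : IsDescendingForestOn f S p)
    {r v : α} (hr : r ∈ S) (hv : v ∈ S) (hvr : f v ≤ f r) :
    IsDescendingForestOn f S (Function.update p r (some v)) := by
  intro x y hxy
  by_cases hx : x = r
  · subst hx
    rw [Function.update_self, Option.some_inj] at hxy
    subst hxy
    exact ⟨hr, hv, hvr⟩
  · rw [Function.update_of_ne hx] at hxy
    exact hp x y hxy

end Forest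

lemma isDescendingForestOn_stepVert {β : Type*} [Preorder β] {f : V → β} {S : Set V}
    (G : SimpleGraph V) [DecidableRel G.Adj] {v : V} {processed : List V} {p : V → Option V}
    (hp : IsDescendingForestOn f S p) (hv : v ∈ S) (hprocessed : ∀ u ∈ processed, u ∈ S)
    (hmin : ∀ x ∈ S, f v ≤ f x) :
    IsDescendingForestOn f S (stepVert G v processed p) := by
  unfold stepVert
  induction processed generalizing p with
  | nil => exact hp
  | cons u processed ih =>
    rw [List.foldl_cons]
    refine ih ?_ fun x hx => hprocessed x (List.mem_cons_of_mem u hx)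
    split_ifs
    · have hroot := hp.rootOf_mem (hprocessed u List.mem_cons_self)
      exact hp.update hroot hv (hmin _ hroot)
    · exact hp

lemma runVert_parent_le {β : Type*} [Preorder β] {f : V → β}
    (G : SimpleGraph V) [DecidableRel G.Adj] :
    ∀ {rest processed : List V} {p : V → Option V},
      IsDescendingForestOn f {x | x ∈ processed} p →
      rest.Pairwise (fun a b => f b ≤ f a) →
      (∀ a ∈ rest, ∀ b ∈ processed, f a ≤ f b) →
      ∀ x y, runVert G rest processed p x = some y → f y ≤ f x
  | [], _, _, hp, _, _, x, y, h => (hp x y h).2.2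
  | v :: rest, processed, p, hp, hsort, hord, x, y, h => by
    rw [List.pairwise_cons] at hsort
    have hmin : ∀ x ∈ v :: processed, f v ≤ f x :=
      List.forall_mem_cons.2 ⟨le_rfl, hord v List.mem_cons_self⟩
    have hstep : IsDescendingForestOn f {x | x ∈ v :: processed} (stepVert G v processed p) :=
      isDescendingForestOn_stepVert G (hp.mono fun x hx => List.mem_cons_of_mem v hx)
        List.mem_cons_self (fun u hu => List.mem_cons_of_mem v hu) hmin
    refine runVert_parent_le G hstep hsort.2 (fun a ha => ?_) x y h
    exact List.forall_mem_cons.2 ⟨hsort.1 a ha, hord a (List.mem_cons_of_mem v ha)⟩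

theorem stmt11_general (G : SimpleGraph V) [DecidableRel G.Adj] (f : V → ℝ)
    (vs : List V)
    (hsort : vs.Pairwise (fun a b => f b ≤ f a))
    (u w : V) (h : scalarForest G vs u = some w) :
    f w ≤ f u :=
  runVert_parent_le G (by simp [IsDescendingForestOn]) hsort (by simp) u w h

/-- In the scalar tree generated by the decreasing-order construction, every
node's scalar value is at least its parent's scalar value. -/
theorem stmt11 (G : SimpleGraph V) [DecidableRel G.Adj] (f : V → ℝ)
    (vs : List V) (hnd : vs.Nodup) (hall : ∀ v : V, v ∈ vs)
    (hsort : vs.Pairwise (fun a b => f b ≤ f a))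
    (u w : V) (h : scalarForest G vs u = some w) :
    f w ≤ f u :=
  stmt11_general G f vs hsort u w h
end

section
/- If a vertex-scalar graph G is connected, then the decreasing-order scalar tree construction produces a single tree (i.e., the resulting forest on the nodes of G has exactly one connected component), rooted at a node of minimum scalar value. -/
/-!
Parent pointers always lead to a vertex processed later, so pointer chains are shorter than the
number of vertices and `rootOf` returns the unique parentless ancestor. Processing `v` grafts
roots under `v` one at a time; each graft only merges root classes and keeps `v` a root, so
afterwards every processed neighbour of `v` has root `v`. Hence adjacent processed vertices
always share a root, and once every vertex is processed, connectivity leaves a single root: the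
last processed vertex, which has the minimum scalar value.
-/

variable {V : Type*} [Fintype V] [DecidableEq V]

open Relation

section Forest

variable {α : Type*}

def ParentRel (p : α → Option α) (a b : α) : Prop := p a = some b

theorem iterParent_of_none {p : α → Option α} {a : α} (h : p a = none) :
    ∀ k, iterParent p k a = a
  | 0 => rfl
  | k + 1 => by simp [iterParent, h]

theorem reflTransGen_iterParent (p : α → Option α) :
    ∀ k a, ReflTransGen (ParentRel p) a (iterParent p k a)
  | 0, _ => .refl
  | k + 1, a => by
    rcases h : p a with _ | b
    · simp only [iterParent, h]
      exact .refl
    · simp only [iterParent, h]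
      exact .head h (reflTransGen_iterParent p k b)

theorem iterParent_eq_none_s12 {p : α → Option α} {m : α → ℕ}
    (hm : ∀ x w, p x = some w → m w < m x) :
    ∀ k a, m a < k → p (iterParent p k a) = none
  | 0, _, hk => absurd hk (Nat.not_lt_zero _)
  | k + 1, a, hk => by
    rcases h : p a with _ | b
    · simp [iterParent, h]
    · simp only [iterParent, h]
      exact iterParent_eq_none_s12 hm k b ((hm a b h).trans_le (Nat.lt_succ_iff.mp hk))

theorem eq_of_reflTransGen_parentRel {p : α → Option α} {a b : α} (h : p a = none)
    (hab : ReflTransGen (ParentRel p) a b) : b = a := by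
  rcases hab.cases_head with rfl | ⟨c, hac, -⟩
  · rfl
  · simp [ParentRel, h] at hac

theorem eq_of_reflTransGen_parentRel_of_none {p : α → Option α} {a r₁ r₂ : α}
    (h₁ : ReflTransGen (ParentRel p) a r₁) (hr₁ : p r₁ = none)
    (h₂ : ReflTransGen (ParentRel p) a r₂) (hr₂ : p r₂ = none) : r₁ = r₂ := by
  induction h₁ using ReflTransGen.head_induction_on with
  | refl => exact (eq_of_reflTransGen_parentRel hr₁ h₂).symm
  | head hac _ ih =>
    rcases h₂.cases_head with rfl | ⟨d, had, hdr⟩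
    · simp [ParentRel, hr₂] at hac
    · exact ih (Option.some.inj (hac.symm.trans had) ▸ hdr)

variable [Fintype α]

/-- A rank that decreases along parent pointers and stays below the number of steps
`rootOf` is allowed to take. -/
def IsRankedBy (p : α → Option α) (m : α → ℕ) : Prop :=
  ∀ x w, p x = some w → m w < m x ∧ m x < Fintype.card α

theorem reflTransGen_rootOf (p : α → Option α) (a : α) :
    ReflTransGen (ParentRel p) a (rootOf p a) :=
  reflTransGen_iterParent p _ a

theorem rootOf_of_none {p : α → Option α} {a : α} (h : p a = none) : rootOf p a = a :=
  iterParent_of_none h _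

theorem IsRankedBy.rootOf_eq_none {p : α → Option α} {m : α → ℕ} (hp : IsRankedBy p m)
    (a : α) : p (rootOf p a) = none := by
  rcases hpa : p a with _ | b
  · rw [rootOf_of_none hpa, hpa]
  · exact iterParent_eq_none_s12 (fun x w hxw => (hp x w hxw).1) _ a (hp a b hpa).2

theorem IsRankedBy.rootOf_eq_iff {p : α → Option α} {m : α → ℕ} (hp : IsRankedBy p m)
    {a r : α} : rootOf p a = r ↔ ReflTransGen (ParentRel p) a r ∧ p r = none :=
  ⟨fun h => h ▸ ⟨reflTransGen_rootOf p a, hp.rootOf_eq_none a⟩, fun ⟨har, hr⟩ =>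
    eq_of_reflTransGen_parentRel_of_none (reflTransGen_rootOf p a) (hp.rootOf_eq_none a) har hr⟩

theorem rootOf_update [DecidableEq α] {p : α → Option α} {m : α → ℕ} {r v : α}
    (hp : IsRankedBy p m) (hq : IsRankedBy (Function.update p r (some v)) m)
    (hr : p r = none) (hv : p v = none) (x : α) :
    rootOf (Function.update p r (some v)) x = if rootOf p x = r then v else rootOf p x := by
  have hvr : v ≠ r := fun hvr => (hq r v (by simp)).1.ne (congrArg m hvr)
  have hlift : ParentRel p ≤ ParentRel (Function.update p r (some v)) := by
    intro b c hbc
    have hbr : b ≠ r := by rintro rfl; simp [ParentRel, hr] at hbc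
    simpa [ParentRel, Function.update_of_ne hbr] using hbc
  have hpath := ReflTransGen.mono hlift _ _ (reflTransGen_rootOf p x)
  rw [hq.rootOf_eq_iff]
  split_ifs with hxr
  · refine ⟨hpath.tail ?_, by simpa [Function.update_of_ne hvr] using hv⟩
    simp [ParentRel, hxr]
  · exact ⟨hpath, by simpa [Function.update_of_ne hxr] using hp.rootOf_eq_none x⟩

end Forest

section ListForest

variable {α : Type*} [DecidableEq α]

/-- In the construction `L` lists the processed vertices, most recent first, so parents are
processed after their children. -/
def IsListForest (L : List α) (p : α → Option α) : Prop :=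
  ∀ x w, p x = some w → x ∈ L ∧ L.idxOf w < L.idxOf x

namespace IsListForest

variable {L : List α} {p : α → Option α} {v r u : α}

theorem isRankedBy [Fintype α] (h : IsListForest L p) (hL : L.Nodup) :
    IsRankedBy p L.idxOf := fun x w hxw =>
  ⟨(h x w hxw).2, (List.idxOf_lt_length_iff.2 (h x w hxw).1).trans_le hL.length_le_card⟩

theorem parent_mem (h : IsListForest L p) {x w : α} (hxw : p x = some w) : w ∈ L :=
  List.idxOf_lt_length_iff.1 ((h x w hxw).2.trans (List.idxOf_lt_length_iff.2 (h x w hxw).1))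

theorem head_eq_none (h : IsListForest (v :: L) p) : p v = none := by
  rcases hv : p v with _ | w
  · rfl
  · simpa using (h v w hv).2

theorem cons (h : IsListForest L p) (hv : v ∉ L) : IsListForest (v :: L) p := by
  intro x w hxw
  obtain ⟨hx, hwx⟩ := h x w hxw
  have hw : w ∈ L := h.parent_mem hxw
  refine ⟨List.mem_cons_of_mem v hx, ?_⟩
  rw [List.idxOf_cons_ne L (ne_of_mem_of_not_mem hw hv).symm,
    List.idxOf_cons_ne L (ne_of_mem_of_not_mem hx hv).symm]
  exact Nat.succ_lt_succ hwx

theorem update (h : IsListForest (v :: L) p) (hr : r ∈ v :: L) (hrv : r ≠ v) :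
    IsListForest (v :: L) (Function.update p r (some v)) := by
  intro x w hxw
  by_cases hxr : x = r
  · subst hxr
    obtain rfl : v = w := by simpa using hxw
    simp [hr, List.idxOf_cons_ne L hrv.symm]
  · exact h x w (by simpa [Function.update_of_ne hxr] using hxw)

theorem rootOf_mem [Fintype α] (h : IsListForest L p) (hu : u ∈ L) : rootOf p u ∈ L := by
  rcases (reflTransGen_rootOf p u).cases_tail with hu' | ⟨c, -, hc⟩
  · rw [hu']
    exact hu
  · exact h.parent_mem hc

end IsListForest

end ListForest

theorem SimpleGraph.Preconnected.apply_eq_of_adj {W β : Type*} {G : SimpleGraph W}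
    (hG : G.Preconnected) {φ : W → β} (h : ∀ a b, G.Adj a b → φ a = φ b) (a b : W) :
    φ a = φ b := by
  obtain ⟨w⟩ := hG a b
  induction w with
  | nil => rfl
  | cons hab _ ih => exact (h _ _ hab).trans ih

section Construction

variable (G : SimpleGraph V) [DecidableRel G.Adj]

def graftStep (v : V) (q : V → Option V) (u : V) : V → Option V :=
  if G.Adj v u ∧ rootOf q u ≠ v then Function.update q (rootOf q u) (some v) else q

theorem stepVert_eq_foldl (v : V) (L : List V) (p : V → Option V) :
    stepVert G v L p = L.foldl (graftStep G v) p :=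
  rfl

def RootsAgreeOnEdges (L : List V) (p : V → Option V) : Prop :=
  ∀ a ∈ L, ∀ b ∈ L, G.Adj a b → rootOf p a = rootOf p b

variable {v u : V} {L : List V} {q : V → Option V}

theorem isListForest_graftStep (h : IsListForest (v :: L) q) (hu : u ∈ L) :
    IsListForest (v :: L) (graftStep G v q u) := by
  unfold graftStep
  split_ifs with hc
  · exact h.update (h.rootOf_mem (List.mem_cons_of_mem v hu)) hc.2
  · exact h

theorem rootOf_graftStep (hnd : (v :: L).Nodup) (h : IsListForest (v :: L) q) (hu : u ∈ L)
    (x : V) : rootOf (graftStep G v q u) x =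
      if G.Adj v u ∧ rootOf q x = rootOf q u then v else rootOf q x := by
  have hq := h.isRankedBy hnd
  have hgraft := isListForest_graftStep G h hu
  unfold graftStep at hgraft ⊢
  split_ifs at hgraft ⊢ with hc hx hx
  · rw [rootOf_update hq (hgraft.isRankedBy hnd) (hq.rootOf_eq_none u) h.head_eq_none,
      if_pos hx.2]
  · rw [rootOf_update hq (hgraft.isRankedBy hnd) (hq.rootOf_eq_none u) h.head_eq_none,
      if_neg fun hxu => hx ⟨hc.1, hxu⟩]
  · rw [hx.2, not_and_not_right.1 hc hx.1]
  · rfl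

theorem isListForest_foldl_graftStep (h : IsListForest (v :: L) q) {l : List V}
    (hl : ∀ u ∈ l, u ∈ L) : IsListForest (v :: L) (l.foldl (graftStep G v) q) := by
  induction l generalizing q with
  | nil => exact h
  | cons u l ih =>
    exact ih (isListForest_graftStep G h (hl u List.mem_cons_self))
      fun w hw => hl w (List.mem_cons_of_mem u hw)

theorem exists_rootOf_foldl_graftStep (hnd : (v :: L).Nodup) (h : IsListForest (v :: L) q)
    {l : List V} (hl : ∀ u ∈ l, u ∈ L) :
    ∃ g : V → V, g v = v ∧ ∀ x, rootOf (l.foldl (graftStep G v) q) x = g (rootOf q x) := by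
  induction l generalizing q with
  | nil => exact ⟨id, rfl, fun _ => rfl⟩
  | cons u l ih =>
    have hu := hl u List.mem_cons_self
    obtain ⟨g, hgv, hg⟩ := ih (isListForest_graftStep G h hu)
      fun w hw => hl w (List.mem_cons_of_mem u hw)
    refine ⟨fun y => g (if G.Adj v u ∧ y = rootOf q u then v else y), by simp [hgv], ?_⟩
    intro x
    rw [List.foldl_cons, hg, rootOf_graftStep G hnd h hu]

theorem isListForest_stepVert (h : IsListForest L q) (hv : v ∉ L) :
    IsListForest (v :: L) (stepVert G v L q) :=
  isListForest_foldl_graftStep G (h.cons hv) fun _ hu => hu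

variable {G}

theorem rootOf_foldl_graftStep_of_adj (hnd : (v :: L).Nodup) (h : IsListForest (v :: L) q)
    {l : List V} (hl : ∀ u ∈ l, u ∈ L) (hu : u ∈ l) (hadj : G.Adj v u) :
    rootOf (l.foldl (graftStep G v) q) u = v := by
  induction l generalizing q with
  | nil => simp at hu
  | cons w l ih =>
    have hw := hl w List.mem_cons_self
    have hl' : ∀ u ∈ l, u ∈ L := fun x hx => hl x (List.mem_cons_of_mem w hx)
    rw [List.foldl_cons]
    by_cases huw : u = w
    · subst huw
      obtain ⟨g, hgv, hg⟩ :=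
        exists_rootOf_foldl_graftStep G hnd (isListForest_graftStep G h hw) hl'
      rw [hg, rootOf_graftStep G hnd h hw, if_pos ⟨hadj, rfl⟩, hgv]
    · exact ih (isListForest_graftStep G h hw) hl' ((List.mem_cons.1 hu).resolve_left huw)

theorem rootsAgreeOnEdges_stepVert (hC : RootsAgreeOnEdges G L q) (h : IsListForest L q)
    (hnd : (v :: L).Nodup) : RootsAgreeOnEdges G (v :: L) (stepVert G v L q) := by
  have hv := (List.nodup_cons.1 hnd).1
  have hF := h.cons hv
  obtain ⟨g, -, hg⟩ := exists_rootOf_foldl_graftStep G hnd hF (l := L) fun _ hu => hu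
  have hroot : rootOf (stepVert G v L q) v = v :=
    rootOf_of_none (isListForest_stepVert G h hv).head_eq_none
  have hadj : ∀ u ∈ L, G.Adj v u → rootOf (stepVert G v L q) u = v := fun u hu =>
    rootOf_foldl_graftStep_of_adj hnd hF (fun _ hu => hu) hu
  intro a ha b hb hab
  rcases List.mem_cons.1 ha with rfl | ha <;> rcases List.mem_cons.1 hb with hb | hb
  · rw [hb]
  · rw [hroot, hadj b hb hab]
  · rw [hb, hroot, hadj a ha (hb ▸ hab).symm]
  · rw [stepVert_eq_foldl, hg, hg, hC a ha b hb hab]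

variable (G)

theorem runVert_spec : ∀ (l L : List V) (p : V → Option V), (l.reverse ++ L).Nodup →
    IsListForest L p → RootsAgreeOnEdges G L p →
    IsListForest (l.reverse ++ L) (runVert G l L p) ∧
      RootsAgreeOnEdges G (l.reverse ++ L) (runVert G l L p)
  | [], _, _, _, h, hC => ⟨h, hC⟩
  | v :: l, L, p, hnd, h, hC => by
    simp only [runVert, List.reverse_cons, List.append_assoc, List.singleton_append] at hnd ⊢
    have hvL := hnd.of_append_right
    exact runVert_spec l (v :: L) _ hnd (isListForest_stepVert G h (List.nodup_cons.1 hvL).1)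
      (rootsAgreeOnEdges_stepVert hC h hvL)

theorem scalarForest_spec {vs : List V} (hnd : vs.Nodup) :
    IsListForest vs.reverse (scalarForest G vs) ∧
      RootsAgreeOnEdges G vs.reverse (scalarForest G vs) := by
  simpa [scalarForest] using runVert_spec G vs [] (fun _ => none) (by simpa using hnd)
    (fun _ _ h => by cases h) (by simp [RootsAgreeOnEdges])

end Construction

/-- If `G` is connected, the decreasing-order construction produces a single
tree: there is a unique parentless node, it has minimum scalar value, and every
node reaches it by following parents. -/
theorem stmt12 (G : SimpleGraph V) [DecidableRel G.Adj] (f : V → ℝ)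
    (hG : G.Connected)
    (vs : List V) (hnd : vs.Nodup) (hall : ∀ v : V, v ∈ vs)
    (hsort : vs.Pairwise (fun a b => f b ≤ f a)) :
    ∃ r : V, scalarForest G vs r = none ∧ (∀ u : V, f r ≤ f u) ∧
      (∀ u : V, Relation.ReflTransGen
        (fun a b => scalarForest G vs a = some b) u r) ∧
      (∀ r' : V, scalarForest G vs r' = none → r' = r) := by
  obtain ⟨hF, hC⟩ := scalarForest_spec G hnd
  have hmem : ∀ x, x ∈ vs.reverse := fun x => List.mem_reverse.2 (hall x)
  obtain ⟨r, t, hrt⟩ := List.exists_cons_of_ne_nil (List.ne_nil_of_mem (hmem hG.nonempty.some))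
  have hsort' : (r :: t).Pairwise fun a b => f a ≤ f b := hrt ▸ List.pairwise_reverse.2 hsort
  rw [hrt] at hF hC hmem
  have hr : scalarForest G vs r = none := hF.head_eq_none
  have hroot : ∀ u, rootOf (scalarForest G vs) u = r := fun u =>
    (hG.preconnected.apply_eq_of_adj (fun a b hab => hC a (hmem a) b (hmem b) hab) u r).trans
      (rootOf_of_none hr)
  refine ⟨r, hr, fun u => ?_, fun u => hroot u ▸ reflTransGen_rootOf _ u,
    fun r' hr' => (rootOf_of_none hr').symm.trans (hroot r')⟩
  rcases List.mem_cons.1 (hmem u) with rfl | hu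
  · exact le_rfl
  · exact List.rel_of_pairwise_cons hsort' hu
end
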